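/- arXiv:1812.00641 — 3 statements merged into one kernel-verified Lean document; each statement's English description precedes it below -/
import Mathlib

section
/- Suppose for all t and u that P(T_P > t, T_R > u) ≥ P(T_P > t)·P(T_R > u), where T_P, T_R are random variables and C_P is a censoring variable independent of (T_P, T_R). Then P(T_R > u | T_P ≤ C_P) ≤ P(T_R > u) ≤ P(T_R > u | T_P > C_P), provided 0 < P(T_P ≤ C_P) < 1. -/
/-!
Conditioning on the independent censoring time `C_P = c` turns the event `T_P > C_P` into
`T_P > c`, so integrating the quadrant dependence inequality at threshold `c` against the law
of `C_P` gives `P(T_P > C_P) P(T_R > u) ≤ P(T_P > C_P, T_R > u)`: the event `T_P > C_P` is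
positively correlated with `T_R > u`, hence its complement `T_P ≤ C_P` is negatively
correlated with it. Dividing by the probabilities of the two conditioning events gives the
two bounds.
-/

open MeasureTheory ProbabilityTheory

section IndependentMixing

variable {Ω α β : Type*} [MeasurableSpace Ω] [MeasurableSpace α] [MeasurableSpace β]
  {P : Measure Ω} [IsFiniteMeasure P] {X : Ω → α} {C : Ω → β}

lemma ProbabilityTheory.IndepFun.measure_preimage_prod_eq_lintegral (hX : Measurable X)
    (hC : Measurable C) (hXC : IndepFun X C P) {S : Set (α × β)} (hS : MeasurableSet S) :
    P ((fun ω => (X ω, C ω)) ⁻¹' S) = ∫⁻ c, P (X ⁻¹' {a | (a, c) ∈ S}) ∂(P.map C) := by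
  rw [← Measure.map_apply (hX.prodMk hC) hS,
    (indepFun_iff_map_prod_eq_prod_map_map hX.aemeasurable hC.aemeasurable).mp hXC,
    Measure.prod_apply_symm hS]
  exact lintegral_congr fun c => Measure.map_apply hX (measurable_prodMk_right hS)

lemma ProbabilityTheory.IndepFun.measure_preimage_prod_mul_le (hX : Measurable X)
    (hC : Measurable C) (hXC : IndepFun X C P) {S T : Set (α × β)} (hS : MeasurableSet S)
    (hT : MeasurableSet T) (q : ENNReal)
    (h : ∀ c, P (X ⁻¹' {a | (a, c) ∈ S}) * q ≤ P (X ⁻¹' {a | (a, c) ∈ T})) :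
    P ((fun ω => (X ω, C ω)) ⁻¹' S) * q ≤ P ((fun ω => (X ω, C ω)) ⁻¹' T) := by
  rw [hXC.measure_preimage_prod_eq_lintegral hX hC hS,
    hXC.measure_preimage_prod_eq_lintegral hX hC hT]
  exact (lintegral_mul_const_le q _).trans (lintegral_mono h)

end IndependentMixing

section Correlation

variable {Ω : Type*} [MeasurableSpace Ω] {P : Measure Ω} {A B : Set Ω}

lemma measure_inter_le_mul_of_mul_le_measure_compl_inter [IsProbabilityMeasure P]
    (hA : MeasurableSet A) (h : P Aᶜ * P B ≤ P (Aᶜ ∩ B)) : P (A ∩ B) ≤ P A * P B := by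
  have hsplit : P (A ∩ B) + P (Aᶜ ∩ B) = P A * P B + P Aᶜ * P B := by
    rw [← add_mul, measure_add_measure_compl hA, measure_univ, one_mul, Set.inter_comm A,
      Set.inter_comm Aᶜ, ← Set.sdiff_eq, measure_inter_add_sdiff B hA]
  refine (ENNReal.add_le_add_iff_right (measure_ne_top P (Aᶜ ∩ B))).mp ?_
  calc P (A ∩ B) + P (Aᶜ ∩ B) = P A * P B + P Aᶜ * P B := hsplit
    _ ≤ P A * P B + P (Aᶜ ∩ B) := add_le_add_right h _

variable [IsFiniteMeasure P] {c : ENNReal}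

lemma cond_le_of_measure_inter_le_mul (hA : MeasurableSet A) (hA0 : P A ≠ 0)
    (h : P (A ∩ B) ≤ P A * c) : P[B | A] ≤ c := by
  rwa [cond_apply hA, ENNReal.inv_mul_le_iff hA0 (measure_ne_top P A)]

lemma le_cond_of_mul_le_measure_inter (hA : MeasurableSet A) (hA0 : P A ≠ 0)
    (h : P A * c ≤ P (A ∩ B)) : c ≤ P[B | A] := by
  rwa [← ENNReal.mul_le_mul_iff_right hA0 (measure_ne_top P A), mul_comm (P A) (P[B | A]),
    cond_mul_eq_inter hA]

end Correlation

/-- Under positive quadrant dependence of `(T_P, T_R)` and censoring `C_P` independent of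
the pair, `P(T_R > u | T_P ≤ C_P) ≤ P(T_R > u) ≤ P(T_R > u | T_P > C_P)`. -/
theorem pqd_conditional_survival_bounds
    {Ω : Type*} [MeasurableSpace Ω] (P : Measure Ω) [IsProbabilityMeasure P]
    (TP TR CP : Ω → ℝ) (hTP : Measurable TP) (hTR : Measurable TR) (hCP : Measurable CP)
    (hindep : IndepFun (fun ω => (TP ω, TR ω)) CP P)
    (hPQD : ∀ t u : ℝ, P {ω | t < TP ω} * P {ω | u < TR ω} ≤ P {ω | t < TP ω ∧ u < TR ω})
    (h0 : 0 < P {ω | TP ω ≤ CP ω}) (h1 : P {ω | TP ω ≤ CP ω} < 1) (u : ℝ) :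
    ProbabilityTheory.cond P {ω | TP ω ≤ CP ω} {ω | u < TR ω} ≤ P {ω | u < TR ω} ∧
    P {ω | u < TR ω} ≤ ProbabilityTheory.cond P {ω | CP ω < TP ω} {ω | u < TR ω} := by
  set A := {ω | TP ω ≤ CP ω}
  set B := {ω | u < TR ω}
  have hA : MeasurableSet A := measurableSet_le hTP hCP
  have hAc : {ω | CP ω < TP ω} = Aᶜ := by ext; simp [A]
  have hAc0 : P Aᶜ ≠ 0 := by
    rw [prob_compl_eq_one_sub hA]
    exact (tsub_pos_of_lt h1).ne'
  have censored_pqd : P {ω | CP ω < TP ω} * P B ≤ P ({ω | CP ω < TP ω} ∩ B) :=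
    hindep.measure_preimage_prod_mul_le (hTP.prodMk hTR) hCP
      (S := {p | p.2 < p.1.1}) (T := {p | p.2 < p.1.1 ∧ u < p.1.2})
      (measurableSet_lt measurable_snd measurable_fst.fst)
      ((measurableSet_lt measurable_snd measurable_fst.fst).inter
        (measurableSet_lt measurable_const measurable_fst.snd))
      _ fun c => hPQD c u
  rw [hAc] at censored_pqd ⊢
  exact ⟨cond_le_of_measure_inter_le_mul hA h0.ne'
      (measure_inter_le_mul_of_mul_le_measure_compl_inter hA censored_pqd),
    le_cond_of_mul_le_measure_inter hA.compl hAc0 censored_pqd⟩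
end

section
/- Under positive quadrant dependence of (T_P, T_R), independent censoring C_P, and the condition that for each u there exists a set 𝒯(u) with P(C_P ∈ 𝒯(u)) > 0 and inf_{t ∈ 𝒯(u)} [P(T_P > t, T_R > u) − P(T_P > t)P(T_R > u)] > 0, the inequalities P(T_R > u | T_P ≤ C_P) < P(T_R > u) < P(T_R > u | T_P > C_P) are strict. -/
open MeasureTheory ProbabilityTheory

/-- Under positive quadrant dependence, independent censoring, and a uniform strict
positivity condition on a set of positive censoring probability, the inequalities
`P(T_R > u | T_P ≤ C_P) < P(T_R > u) < P(T_R > u | T_P > C_P)` are strict. -/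
theorem pqd_conditional_survival_bounds_strict
    {Ω : Type*} [MeasurableSpace Ω] (P : Measure Ω) [IsProbabilityMeasure P]
    (TP TR CP : Ω → ℝ) (hTP : Measurable TP) (hTR : Measurable TR) (hCP : Measurable CP)
    (hindep : IndepFun (fun ω => (TP ω, TR ω)) CP P)
    (hPQD : ∀ t u : ℝ, P {ω | t < TP ω} * P {ω | u < TR ω} ≤ P {ω | t < TP ω ∧ u < TR ω})
    (h0 : 0 < P {ω | TP ω ≤ CP ω}) (h1 : P {ω | TP ω ≤ CP ω} < 1)
    (hstrict : ∀ u : ℝ, ∃ T : Set ℝ, MeasurableSet T ∧ 0 < P {ω | CP ω ∈ T} ∧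
      ∃ ε > 0, ∀ t ∈ T,
        ε ≤ (P {ω | t < TP ω ∧ u < TR ω}).toReal
              - (P {ω | t < TP ω}).toReal * (P {ω | u < TR ω}).toReal) :
    ∀ u : ℝ,
      ProbabilityTheory.cond P {ω | TP ω ≤ CP ω} {ω | u < TR ω} < P {ω | u < TR ω} ∧
      P {ω | u < TR ω} < ProbabilityTheory.cond P {ω | CP ω < TP ω} {ω | u < TR ω} := by
  intro u
  have hX : Measurable fun ω => (TP ω, TR ω) := hTP.prodMk hTR
  set ν : Measure ℝ := P.map CP with hνdef
  haveI : IsProbabilityMeasure ν := Measure.isProbabilityMeasure_map hCP.aemeasurable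
  haveI : IsProbabilityMeasure (P.map fun ω => (TP ω, TR ω)) :=
    Measure.isProbabilityMeasure_map hX.aemeasurable
  have hmap : P.map (fun ω => ((TP ω, TR ω), CP ω))
      = (P.map fun ω => (TP ω, TR ω)).prod ν :=
    (indepFun_iff_map_prod_eq_prod_map_map hX.aemeasurable hCP.aemeasurable).mp hindep
  -- generic slicing identity
  have key : ∀ S : Set ((ℝ × ℝ) × ℝ), MeasurableSet S →
      P ((fun ω => ((TP ω, TR ω), CP ω)) ⁻¹' S)
        = ∫⁻ c, (P.map fun ω => (TP ω, TR ω)) ((fun p => (p, c)) ⁻¹' S) ∂ν := by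
    intro S hS
    rw [← Measure.map_apply (hX.prodMk hCP) hS, hmap, Measure.prod_apply_symm hS]
  -- set-level measurability
  have hsetTP : ∀ c : ℝ, MeasurableSet {ω | c < TP ω} := fun c =>
    measurableSet_lt measurable_const hTP
  have hsetB : MeasurableSet {ω | u < TR ω} := measurableSet_lt measurable_const hTR
  have hset2 : ∀ c : ℝ, MeasurableSet {ω | c < TP ω ∧ u < TR ω} := fun c =>
    (hsetTP c).inter hsetB
  -- identity 1
  have hS1 : MeasurableSet {q : (ℝ × ℝ) × ℝ | q.2 < q.1.1 ∧ u < q.1.2} :=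
    (measurableSet_lt measurable_snd (measurable_fst.fst)).inter
      (measurableSet_lt measurable_const (measurable_fst.snd))
  have id1 : P {ω | CP ω < TP ω ∧ u < TR ω}
      = ∫⁻ c, P {ω | c < TP ω ∧ u < TR ω} ∂ν := by
    have := key _ hS1
    rw [show (fun ω => ((TP ω, TR ω), CP ω)) ⁻¹' {q : (ℝ × ℝ) × ℝ | q.2 < q.1.1 ∧ u < q.1.2}
        = {ω | CP ω < TP ω ∧ u < TR ω} from rfl] at this
    rw [this]
    refine lintegral_congr fun c => ?_
    rw [show (fun p : ℝ × ℝ => (p, c)) ⁻¹' {q : (ℝ × ℝ) × ℝ | q.2 < q.1.1 ∧ u < q.1.2}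
        = {p : ℝ × ℝ | c < p.1 ∧ u < p.2} from rfl,
      Measure.map_apply hX (show MeasurableSet {p : ℝ × ℝ | c < p.1 ∧ u < p.2} from
        (measurableSet_lt measurable_const measurable_fst).inter
        (measurableSet_lt measurable_const measurable_snd))]
    rfl
  -- identity 2
  have hS2 : MeasurableSet {q : (ℝ × ℝ) × ℝ | q.2 < q.1.1} :=
    measurableSet_lt measurable_snd (measurable_fst.fst)
  have id2 : P {ω | CP ω < TP ω} = ∫⁻ c, P {ω | c < TP ω} ∂ν := by
    have := key _ hS2
    rw [show (fun ω => ((TP ω, TR ω), CP ω)) ⁻¹' {q : (ℝ × ℝ) × ℝ | q.2 < q.1.1}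
        = {ω | CP ω < TP ω} from rfl] at this
    rw [this]
    refine lintegral_congr fun c => ?_
    rw [show (fun p : ℝ × ℝ => (p, c)) ⁻¹' {q : (ℝ × ℝ) × ℝ | q.2 < q.1.1}
        = {p : ℝ × ℝ | c < p.1} from rfl,
      Measure.map_apply hX (show MeasurableSet {p : ℝ × ℝ | c < p.1} from
        measurableSet_lt measurable_const measurable_fst)]
    rfl
  -- the strict integral inequality
  obtain ⟨T, hTmeas, hTpos, ε, hε, hTε⟩ := hstrict u
  have hνT : ν T = P {ω | CP ω ∈ T} := Measure.map_apply hCP hTmeas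
  set PB := P {ω | u < TR ω} with hPBdef
  have hg_le : ∀ c, PB * P {ω | c < TP ω} + T.indicator (fun _ => ENNReal.ofReal ε) c
      ≤ P {ω | c < TP ω ∧ u < TR ω} := by
    intro c
    by_cases hc : c ∈ T
    · have h := hTε c hc
      have hfin1 : P {ω | c < TP ω ∧ u < TR ω} ≠ ⊤ := measure_ne_top _ _
      have hfin2 : P {ω | c < TP ω} * PB ≠ ⊤ :=
        ENNReal.mul_ne_top (measure_ne_top _ _) (measure_ne_top _ _)
      rw [Set.indicator_of_mem hc]
      have : P {ω | c < TP ω} * PB + ENNReal.ofReal ε ≤ P {ω | c < TP ω ∧ u < TR ω} := by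
        rw [← ENNReal.ofReal_toReal hfin1, ← ENNReal.ofReal_toReal hfin2]
        rw [← ENNReal.ofReal_add ENNReal.toReal_nonneg hε.le]
        apply ENNReal.ofReal_le_ofReal
        have htr : (P {ω | c < TP ω} * PB).toReal
            = (P {ω | c < TP ω}).toReal * PB.toReal := ENNReal.toReal_mul
        rw [htr]
        linarith [h]
      calc PB * P {ω | c < TP ω} + ENNReal.ofReal ε
          = P {ω | c < TP ω} * PB + ENNReal.ofReal ε := by rw [mul_comm]
        _ ≤ _ := this
    · rw [Set.indicator_of_notMem hc, add_zero, mul_comm]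
      exact hPQD c u
  have hstep : PB * P {ω | CP ω < TP ω} + ENNReal.ofReal ε * ν T
      ≤ P {ω | CP ω < TP ω ∧ u < TR ω} := by
    rw [id1, id2, ← lintegral_const_mul' PB _ (measure_ne_top _ _),
      ← lintegral_indicator_const hTmeas, ← lintegral_add_right _
        (measurable_const.indicator hTmeas)]
    exact lintegral_mono fun c => hg_le c
  have hmain : PB * P {ω | CP ω < TP ω} < P {ω | CP ω < TP ω ∧ u < TR ω} := by
    refine lt_of_lt_of_le ?_ hstep
    apply ENNReal.lt_add_right (ENNReal.mul_ne_top (measure_ne_top _ _) (measure_ne_top _ _))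
    refine mul_ne_zero ?_ ?_
    · simpa using (ENNReal.ofReal_pos.mpr hε).ne'
    · rw [hνT]; exact hTpos.ne'
  -- basic facts about the events
  have hAmeas : MeasurableSet {ω | TP ω ≤ CP ω} := measurableSet_le hTP hCP
  have hAcompl : {ω | CP ω < TP ω} = {ω | TP ω ≤ CP ω}ᶜ := by
    ext ω; simp [not_le]
  have hAcmeas : MeasurableSet {ω | CP ω < TP ω} := by
    rw [hAcompl]; exact hAmeas.compl
  have hPAc_pos : 0 < P {ω | CP ω < TP ω} := by
    rw [hAcompl, measure_compl hAmeas (measure_ne_top _ _), measure_univ]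
    exact tsub_pos_of_lt h1
  have hsum : P {ω | TP ω ≤ CP ω} + P {ω | CP ω < TP ω} = 1 := by
    rw [hAcompl]
    exact prob_add_prob_compl hAmeas
  have hinterAc : {ω | CP ω < TP ω} ∩ {ω | u < TR ω} = {ω | CP ω < TP ω ∧ u < TR ω} := rfl
  have hinterA : {ω | TP ω ≤ CP ω} ∩ {ω | u < TR ω} =
      {ω | u < TR ω} ∩ {ω | TP ω ≤ CP ω} := Set.inter_comm _ _
  -- split PB
  have hsplit : P ({ω | u < TR ω} ∩ {ω | TP ω ≤ CP ω}) + P {ω | CP ω < TP ω ∧ u < TR ω}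
      = PB := by
    have := measure_inter_add_diff (μ := P) {ω | u < TR ω} hAmeas
    rw [hPBdef, ← this]
    congr 1
    rw [Set.diff_eq, ← hAcompl, ← hinterAc, Set.inter_comm]
  have hsplit2 : PB * P {ω | TP ω ≤ CP ω} + PB * P {ω | CP ω < TP ω} = PB := by
    rw [← mul_add, hsum, mul_one]
  -- left strict inequality at the intersection level
  have hleft0 : P ({ω | u < TR ω} ∩ {ω | TP ω ≤ CP ω}) < PB * P {ω | TP ω ≤ CP ω} := by
    have h := hmain
    have heq : P ({ω | u < TR ω} ∩ {ω | TP ω ≤ CP ω}) + P {ω | CP ω < TP ω ∧ u < TR ω}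
        = PB * P {ω | TP ω ≤ CP ω} + PB * P {ω | CP ω < TP ω} := by
      rw [hsplit, hsplit2]
    have hlt : P ({ω | u < TR ω} ∩ {ω | TP ω ≤ CP ω}) + P {ω | CP ω < TP ω ∧ u < TR ω}
        < PB * P {ω | TP ω ≤ CP ω} + P {ω | CP ω < TP ω ∧ u < TR ω} := by
      rw [heq]
      exact ENNReal.add_lt_add_left
        (ENNReal.mul_ne_top (measure_ne_top _ _) (measure_ne_top _ _)) hmain
    exact (ENNReal.add_lt_add_iff_right (measure_ne_top _ _)).mp hlt
  constructor
  · rw [cond_apply hAmeas, hinterA, ← ENNReal.div_eq_inv_mul,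
      ENNReal.div_lt_iff (Or.inl h0.ne') (Or.inl (measure_ne_top _ _))]
    exact hleft0
  · rw [cond_apply hAcmeas, hinterAc, ← ENNReal.div_eq_inv_mul,
      ENNReal.lt_div_iff_mul_lt (Or.inl hPAc_pos.ne') (Or.inl (measure_ne_top _ _))]
    exact hmain
end

section
/- Let φ : ℝ → ℝ be twice continuously differentiable with |φ''| ≤ M, K a kernel supported in [−1,1], h > 0, and s ∈ [h, τ₀ − h]. Then for k odd, |(1/h) ∫₀^{τ₀} ((x−s)/h)^k K((x−s)/h) φ(x) dx| ≤ C h for a constant C depending only on K, k, M, and sup|φ'|. (Interior odd-moment kernel averages are O(h).) -/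
/-!
After the substitution `x = s + h u` the average becomes `∫_{-1}^{1} g u φ(s + h u) du` with
`g u = u ^ k K u`, an odd function bounded by `sup K` (on `[-1, 1]` we have `|u ^ k| ≤ 1`).
Since `g` is odd, `∫ g = 0`, so `φ(s + h u)` may be replaced by `φ(s + h u) - φ(s)`, which the
mean value theorem bounds by `L h`; the interior condition keeps `s + h u` inside `[0, τ₀]`.
-/

open MeasureTheory Set intervalIntegral

theorem abs_pow_mul_le_of_eq_zero_of_one_lt_abs {K : ℝ → ℝ} {B : ℝ} (hK : ∀ r, |K r| ≤ B)
    (hsupp : ∀ r, 1 < |r| → K r = 0) (k : ℕ) (r : ℝ) : |r ^ k * K r| ≤ B := by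
  by_cases hr : 1 < |r|
  · simpa [hsupp r hr] using (abs_nonneg _).trans (hK r)
  · rw [abs_mul, abs_pow]
    calc |r| ^ k * |K r| ≤ 1 * |K r| := by
          gcongr
          exact pow_le_one₀ (abs_nonneg r) (not_lt.mp hr)
      _ ≤ B := (one_mul _).trans_le (hK r)

theorem integral_neg_to_self_eq_zero_of_odd {g : ℝ → ℝ} (hg : ∀ x, g (-x) = -g x) (a : ℝ) :
    ∫ x in -a..a, g x = 0 := by
  have h_neg : ∫ x in -a..a, g (-x) = -∫ x in -a..a, g x := by
    simp only [hg, intervalIntegral.integral_neg]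
  rw [intervalIntegral.integral_comp_neg, neg_neg] at h_neg
  linarith

theorem intervalIntegral_eq_of_eq_zero_of_notMem_Icc {E : Type*} [NormedAddCommGroup E]
    [NormedSpace ℝ E] {f : ℝ → E} {a b c d : ℝ} (hac : a ≤ c) (hcd : c ≤ d) (hdb : d ≤ b)
    (hf : ∀ x ∉ Icc c d, f x = 0) : ∫ x in a..b, f x = ∫ x in c..d, f x := by
  rw [integral_of_le (hac.trans (hcd.trans hdb)), integral_of_le hcd]
  refine setIntegral_eq_of_subset_of_ae_sdiff_eq_zero measurableSet_Ioc.nullMeasurableSet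
    (Ioc_subset_Ioc hac hdb) ?_
  filter_upwards [measure_eq_zero_iff_ae_notMem.mp (measure_singleton c)] with x hxc hx
  refine hf x fun hx' => hx.2 ⟨lt_of_le_of_ne hx'.1 ?_, hx'.2⟩
  exact fun h => hxc h.symm

theorem inv_mul_integral_comp_div_sub_mul_eq {f ψ : ℝ → ℝ} {a b s h : ℝ} (hh : 0 < h)
    (ha : a ≤ s - h) (hb : s + h ≤ b) (hf : ∀ r, 1 < |r| → f r = 0) :
    (1 / h) * ∫ x in a..b, f ((x - s) / h) * ψ x = ∫ u in (-1)..1, f u * ψ (s + h * u) := by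
  have h_vanish : ∀ x ∉ Icc (s - h) (s + h), f ((x - s) / h) * ψ x = 0 := by
    intro x hx
    rw [hf _ ?_, zero_mul]
    rw [abs_div, abs_of_pos hh, one_lt_div hh, lt_abs]
    rw [mem_Icc, not_and_or, not_le, not_le] at hx
    rcases hx with hx | hx
    · right; linarith
    · left; linarith
  have h_subst := smul_integral_comp_mul_add (a := -1) (b := 1)
    (fun x => f ((x - s) / h) * ψ x) h s
  rw [smul_eq_mul, mul_neg_one, mul_one, neg_add_eq_sub, add_comm h s] at h_subst
  rw [intervalIntegral_eq_of_eq_zero_of_notMem_Icc ha (by linarith) hb h_vanish, ← h_subst,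
    ← mul_assoc, one_div, inv_mul_cancel₀ hh.ne', one_mul]
  refine intervalIntegral.integral_congr fun u _ => ?_
  simp only [add_sub_cancel_right, mul_div_cancel_left₀ u hh.ne', add_comm s]

theorem abs_integral_mul_le_of_odd {g ψ : ℝ → ℝ} {B D : ℝ} (hg_odd : ∀ u, g (-u) = -g u)
    (hg_meas : AEStronglyMeasurable g volume) (hg_bdd : ∀ u, |g u| ≤ B)
    (hψ : ContinuousOn ψ (Icc (-1) 1)) (hψ_osc : ∀ u ∈ Icc (-1 : ℝ) 1, |ψ u - ψ 0| ≤ D) :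
    |∫ u in (-1)..1, g u * ψ u| ≤ 2 * B * D := by
  have hg_int : IntervalIntegrable g volume (-1) 1 :=
    (intervalIntegrable_const (c := B)).mono_fun' hg_meas.restrict
      (Filter.Eventually.of_forall hg_bdd)
  have h_center : ∫ u in (-1)..1, g u * ψ u = ∫ u in (-1)..1, g u * (ψ u - ψ 0) := by
    simp only [mul_sub]
    rw [intervalIntegral.integral_sub
      (hg_int.mul_continuousOn (by rwa [uIcc_of_le (by norm_num)]))
      (hg_int.mul_const _), intervalIntegral.integral_mul_const,
      integral_neg_to_self_eq_zero_of_odd hg_odd, zero_mul, sub_zero]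
  have h_pointwise : ∀ u ∈ uIoc (-1 : ℝ) 1, ‖g u * (ψ u - ψ 0)‖ ≤ B * D := by
    intro u hu
    rw [uIoc_of_le (by norm_num)] at hu
    rw [Real.norm_eq_abs, abs_mul]
    exact mul_le_mul (hg_bdd u) (hψ_osc u (Ioc_subset_Icc_self hu)) (abs_nonneg _)
      ((abs_nonneg _).trans (hg_bdd u))
  calc |∫ u in (-1)..1, g u * ψ u| = ‖∫ u in (-1)..1, g u * (ψ u - ψ 0)‖ := by
        rw [h_center, Real.norm_eq_abs]
    _ ≤ B * D * |1 - -1| := norm_integral_le_of_norm_le_const h_pointwise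
    _ = 2 * B * D := by norm_num; ring

theorem abs_sub_le_of_abs_deriv_le {φ : ℝ → ℝ} {a b s h L u : ℝ} (hφ : Differentiable ℝ φ)
    (hL : ∀ x ∈ Icc a b, |deriv φ x| ≤ L) (hh : 0 ≤ h) (ha : a ≤ s - h) (hb : s + h ≤ b)
    (hu : u ∈ Icc (-1 : ℝ) 1) : |φ (s + h * u) - φ s| ≤ L * h := by
  have h_mem : ∀ v ∈ Icc (-1 : ℝ) 1, s + h * v ∈ Icc a b := fun v hv =>
    ⟨by nlinarith [hv.1], by nlinarith [hv.2]⟩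
  have hL_nonneg : 0 ≤ L := (abs_nonneg _).trans (hL s (by simpa using h_mem 0 (by norm_num)))
  have h_mvt := (convex_Icc a b).norm_image_sub_le_of_norm_deriv_le
    (fun x _ => hφ.differentiableAt) hL (h_mem 0 (by norm_num)) (h_mem u hu)
  simp only [Real.norm_eq_abs, mul_zero, add_zero, add_sub_cancel_left, abs_mul,
    abs_of_nonneg hh] at h_mvt
  calc |φ (s + h * u) - φ s| ≤ L * (h * |u|) := h_mvt
    _ ≤ L * h := by gcongr; exact mul_le_of_le_one_right hh (abs_le.mpr hu)

theorem odd_moment_kernel_average_order_h_general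
    (τ0 L : ℝ) (K : ℝ → ℝ) (hKnn : ∀ r, 0 ≤ K r) (hKbdd : ∃ B, ∀ r, K r ≤ B)
    (hKsupp : ∀ r, 1 < |r| → K r = 0) (hKsymm : ∀ r, K (-r) = K r)
    (hKmeas : Measurable K)
    (k : ℕ) (hk : Odd k)
    (φ : ℝ → ℝ) (hφ : ContDiff ℝ 2 φ)
    (hL : ∀ x ∈ Set.Icc (0:ℝ) τ0, |deriv φ x| ≤ L) :
    ∃ C : ℝ, 0 ≤ C ∧ ∀ h s : ℝ, 0 < h → h ≤ s → s ≤ τ0 - h →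
      |(1/h) * ∫ x in (0:ℝ)..τ0, ((x - s)/h)^k * K ((x - s)/h) * φ x| ≤ C * h := by
  obtain ⟨B, hB⟩ := hKbdd
  set g : ℝ → ℝ := fun r => r ^ k * K r
  have hg_bdd : ∀ r, |g r| ≤ B := abs_pow_mul_le_of_eq_zero_of_one_lt_abs
    (fun r => (abs_of_nonneg (hKnn r)).trans_le (hB r)) hKsupp k
  have hg_odd : ∀ r, g (-r) = -g r := fun r => by simp only [g, hKsymm, hk.neg_pow, neg_mul]
  have hg_supp : ∀ r, 1 < |r| → g r = 0 := fun r hr => by simp only [g, hKsupp r hr, mul_zero]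
  refine ⟨2 * B * |L|, by positivity [(hKnn 0).trans (hB 0)], fun h s hh hhs hsτ => ?_⟩
  have h_osc : ∀ u ∈ Icc (-1 : ℝ) 1, |φ (s + h * u) - φ (s + h * 0)| ≤ |L| * h :=
    fun u hu => by
      simpa using abs_sub_le_of_abs_deriv_le (hφ.differentiable (by norm_num))
        (fun x hx => (hL x hx).trans (le_abs_self L)) hh.le (by linarith) (by linarith) hu
  show |(1 / h) * ∫ x in (0:ℝ)..τ0, g ((x - s) / h) * φ x| ≤ _
  rw [inv_mul_integral_comp_div_sub_mul_eq hh (by linarith) (by linarith) hg_supp]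
  calc _ ≤ 2 * B * (|L| * h) := abs_integral_mul_le_of_odd hg_odd
        ((measurable_id.pow_const k).mul hKmeas).aestronglyMeasurable hg_bdd
        (hφ.continuous.comp (by fun_prop)).continuousOn h_osc
    _ = 2 * B * |L| * h := by ring

/-- Interior odd-moment kernel averages are `O(h)`: for odd `k` there is a constant `C`
(depending only on `K`, `k`, `M`, `L`, `τ₀`) such that for all interior bandwidth/point
pairs, `|(1/h)∫₀^{τ₀} ((x−s)/h)^k K((x−s)/h) φ(x) dx| ≤ C h`. -/
theorem odd_moment_kernel_average_order_h
    (τ0 L M : ℝ) (K : ℝ → ℝ) (hKnn : ∀ r, 0 ≤ K r) (hKbdd : ∃ B, ∀ r, K r ≤ B)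
    (hKsupp : ∀ r, 1 < |r| → K r = 0) (hKsymm : ∀ r, K (-r) = K r)
    (hKmeas : Measurable K)
    (k : ℕ) (hk : Odd k)
    (φ : ℝ → ℝ) (hφ : ContDiff ℝ 2 φ)
    (hL : ∀ x ∈ Set.Icc (0:ℝ) τ0, |deriv φ x| ≤ L)
    (hM : ∀ x ∈ Set.Icc (0:ℝ) τ0, |deriv (deriv φ) x| ≤ M) :
    ∃ C : ℝ, 0 ≤ C ∧ ∀ h s : ℝ, 0 < h → h ≤ s → s ≤ τ0 - h →
      |(1/h) * ∫ x in (0:ℝ)..τ0, ((x - s)/h)^k * K ((x - s)/h) * φ x| ≤ C * h :=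
  odd_moment_kernel_average_order_h_general τ0 L K hKnn hKbdd hKsupp hKsymm hKmeas k hk φ hφ hL
end
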